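/- arXiv:0811.1569 — 2 statements merged into one kernel-verified Lean document; each statement's English description precedes it below -/
import Mathlib

section
/- Let G be an algebraic group over a finite field 𝔽_q with Lie algebra 𝔤, let ρ : G → GL(V) be a representation on a finite-dimensional 𝔽_q-vector space V with derivative ϱ : 𝔤 → 𝔤𝔩(V), and let μ : V × V* → 𝔤* be the moment map defined by ⟨μ(v,w), x⟩ = w(ϱ(x)v). Fix a nontrivial additive character Ψ of 𝔽_q. Then for any ξ ∈ 𝔤*, the number of solutions (v,w) ∈ V × V* of μ(v,w) = ξ equals |𝔤|^{-1}·|V|·∑_{x∈𝔤} |ker(ϱ(x))|·Ψ(⟨x,ξ⟩). -/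
/-!
Fourier inversion on `𝔤*`: the indicator of `μ(v,w) = ξ` is `|𝔤|⁻¹ ∑ₓ Ψ(⟨x, ξ - μ(v,w)⟩)`.
For fixed `x` and `v`, the sum of `Ψ(-w(ϱ(x)v))` over `w ∈ V*` is `|V|` if `ϱ(x)v = 0` and `0`
otherwise, so the sum over all `(v,w)` is `Ψ(⟨x,ξ⟩) |V| |ker ϱ(x)|`.
-/

open Finset

namespace AddChar

section CommRing

variable {K R A : Type*} [Field K] [CommRing R] [IsDomain R]
  [AddCommGroup A] [Module K A] {ψ : AddChar K R}

lemma sum_apply_linearMap_eq_ite [Fintype A] (hψ : ψ ≠ 0) (f : A →ₗ[K] K) [Decidable (f = 0)] :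
    ∑ a, ψ (f a) = if f = 0 then (Fintype.card A : R) else 0 := by
  have hcomp : ψ.compAddMonoidHom f.toAddMonoidHom = 0 ↔ f = 0 := by
    refine ⟨fun h ↦ ?_, fun hf ↦ by ext; simp [hf]⟩
    by_contra hf
    exact hψ (compAddMonoidHom_injective_left _ (LinearMap.surjective hf) h)
  classical
  simpa [if_congr hcomp rfl rfl] using (ψ.compAddMonoidHom f.toAddMonoidHom).sum_eq_ite

lemma sum_dual_apply_eq_ite [Fintype (Module.Dual K A)] [DecidableEq A] (hψ : ψ ≠ 0) (a : A) :
    ∑ w : Module.Dual K A, ψ (w a) =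
      if a = 0 then (Fintype.card (Module.Dual K A) : R) else 0 := by
  classical
  simpa [Module.eval_apply_eq_zero_iff] using
    sum_apply_linearMap_eq_ite hψ (Module.Dual.eval K A a)

end CommRing

section Field

variable {K R A : Type*} [Field K] [Field R] [CharZero R]
  [AddCommGroup A] [Module K A] [Fintype A] {ψ : AddChar K R}

lemma ite_eq_inv_card_mul_sum (hψ : ψ ≠ 0) (f : A →ₗ[K] K) [Decidable (f = 0)] :
    (if f = 0 then 1 else 0 : R) = (Fintype.card A : R)⁻¹ * ∑ a, ψ (f a) := by
  have hcard : (Fintype.card A : R) ≠ 0 := Nat.cast_ne_zero.2 Fintype.card_ne_zero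
  rw [sum_apply_linearMap_eq_ite hψ]
  split_ifs <;> simp [hcard]

lemma natCard_fiber_eq_inv_card_mul_sum {P : Type*} [Fintype P] (hψ : ψ ≠ 0)
    (m : P → Module.Dual K A) (ξ : Module.Dual K A) :
    (Nat.card {p // m p = ξ} : R) = (Fintype.card A : R)⁻¹ * ∑ a, ∑ p, ψ (ξ a - m p a) := by
  classical
  calc (Nat.card {p // m p = ξ} : R) = ∑ p, if ξ - m p = 0 then 1 else 0 := by
        simp_rw [Nat.card_eq_fintype_card, Fintype.card_subtype, natCast_card_filter,
          sub_eq_zero, eq_comm]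
    _ = (Fintype.card A : R)⁻¹ * ∑ a, ∑ p, ψ (ξ a - m p a) := by
        simp_rw [ite_eq_inv_card_mul_sum hψ, ← mul_sum, sum_comm (s := univ (α := P))]
        rfl

end Field

end AddChar

lemma Module.card_dual {K V : Type*} [Field K] [AddCommGroup V] [Module K V] [Fintype V]
    [FiniteDimensional K V] [Fintype (Module.Dual K V)] :
    Fintype.card (Module.Dual K V) = Fintype.card V :=
  (Fintype.card_congr (Module.finBasis K V).toDualEquiv.toEquiv).symm

section MomentMap

variable {K g V : Type*} [Field K] [AddCommGroup g] [Module K g] [AddCommGroup V] [Module K V]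

def momentMap (ϱ : g →ₗ[K] Module.End K V) (p : V × Module.Dual K V) : Module.Dual K g :=
  p.2 ∘ₗ LinearMap.applyₗ p.1 ∘ₗ ϱ

@[simp]
lemma momentMap_apply (ϱ : g →ₗ[K] Module.End K V) (p : V × Module.Dual K V) (x : g) :
    momentMap ϱ p x = p.2 (ϱ x p.1) := rfl

lemma sum_addChar_sub_momentMap_apply [Fintype V] [FiniteDimensional K V]
    [Fintype (Module.Dual K V)] {R : Type*} [CommRing R] [IsDomain R] {ψ : AddChar K R}
    (hψ : ψ ≠ 0) (ϱ : g →ₗ[K] Module.End K V) (t : K) (x : g) :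
    ∑ p, ψ (t - momentMap ϱ p x) = ψ t * (Fintype.card V * Nat.card (LinearMap.ker (ϱ x))) := by
  classical
  calc ∑ p, ψ (t - momentMap ϱ p x) = ψ t * ∑ v : V, ∑ w : Module.Dual K V, ψ (w (ϱ x v)) := by
        simp_rw [mul_sum, Fintype.sum_prod_type, momentMap_apply, sub_eq_add_neg,
          AddChar.map_add_eq_mul]
        exact sum_congr rfl fun v _ ↦ Fintype.sum_equiv (Equiv.neg _) _ _ fun w ↦ rfl
    _ = ψ t * (Fintype.card V * Nat.card (LinearMap.ker (ϱ x))) := by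
        simp_rw [AddChar.sum_dual_apply_eq_ite hψ, Module.card_dual, sum_ite, sum_const_zero,
          add_zero, sum_const, nsmul_eq_mul, Nat.card_eq_fintype_card, Fintype.card_subtype]
        rw [mul_comm (Fintype.card V : R)]
        simp only [LinearMap.mem_ker]

end MomentMap

theorem moment_map_point_count_general
    (K : Type*) [Field K] [Fintype K]
    (g : Type*) [AddCommGroup g] [Module K g] [Fintype g]
    (V : Type*) [AddCommGroup V] [Module K V] [FiniteDimensional K V] [Fintype V]
    (ϱ : g →ₗ[K] Module.End K V)
    (Ψ : AddChar K ℂˣ) (hΨ : Ψ ≠ 1)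
    (ξ : Module.Dual K g) :
    (Nat.card {p : V × Module.Dual K V // ∀ x : g, p.2 (ϱ x p.1) = ξ x} : ℂ) =
      ((Fintype.card g : ℂ))⁻¹ * (Fintype.card V : ℂ) *
        ∑ x : g, (Nat.card (LinearMap.ker (ϱ x)) : ℂ) * (Ψ (ξ x) : ℂ) := by
  have := Module.finite_of_finite K (M := Module.Dual K V)
  have := Fintype.ofFinite (Module.Dual K V)
  set ψ : AddChar K ℂ := (Units.coeHom ℂ).compAddChar Ψ
  have hψ : ψ ≠ 0 := fun h ↦
    hΨ <| MonoidHom.compAddChar_injective_right _ Units.val_injective (h.trans rfl)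
  have hfiber : {p : V × Module.Dual K V // ∀ x : g, p.2 (ϱ x p.1) = ξ x} =
      {p // momentMap ϱ p = ξ} := by
    simp only [LinearMap.ext_iff, momentMap_apply]
  rw [hfiber, AddChar.natCard_fiber_eq_inv_card_mul_sum hψ]
  simp_rw [sum_addChar_sub_momentMap_apply hψ, mul_sum, mul_assoc]
  refine sum_congr rfl fun x _ ↦ ?_
  simp only [ψ, MonoidHom.compAddChar_apply, Function.comp_apply, Units.coeHom_apply]
  ring

/-- Number of solutions of the moment map equation `μ(v,w) = ξ` over a finite field:
`#{(v,w) : μ(v,w) = ξ} = |𝔤|⁻¹ |V| ∑_{x ∈ 𝔤} |ker ϱ(x)| Ψ(⟨x,ξ⟩)`, where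
`⟨μ(v,w), x⟩ = w(ϱ(x)v)`. -/
theorem moment_map_point_count
    (K : Type*) [Field K] [Fintype K]
    (g : Type*) [AddCommGroup g] [Module K g] [FiniteDimensional K g] [Fintype g]
    (V : Type*) [AddCommGroup V] [Module K V] [FiniteDimensional K V] [Fintype V]
    (ϱ : g →ₗ[K] Module.End K V)
    (Ψ : AddChar K ℂˣ) (hΨ : Ψ ≠ 1)
    (ξ : Module.Dual K g) :
    (Nat.card {p : V × Module.Dual K V // ∀ x : g, p.2 (ϱ x p.1) = ξ x} : ℂ) =
      ((Fintype.card g : ℂ))⁻¹ * (Fintype.card V : ℂ) *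
        ∑ x : g, (Nat.card (LinearMap.ker (ϱ x)) : ℂ) * (Ψ (ξ x) : ℂ) :=
  moment_map_point_count_general K g V ϱ Ψ hΨ ξ
end

section
/- Let Γ = (I,E) be a quiver, K a field, v,w ∈ ℕ^I dimension vectors with char(K) = 0 or char(K) > ∑_i v_i, and λ ∈ K^×. Suppose (A_e, I_i, B_e, J_i) satisfies the moment map equation I_i J_i + ∑_{e: s(e)=i} B_e A_e − ∑_{e: t(e)=i} A_e B_e = λ·Id_{V_i} for all i ∈ I. If x = (x_i)_{i∈I} with x_i ∈ End(V_i) satisfies x_{t(e)}A_e = A_e x_{s(e)}, x_{s(e)}B_e = B_e x_{t(e)}, x_i I_i = 0 and J_i x_i = 0 for all edges e and vertices i, then x = 0. -/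
open Module

/-- Transport an endomorphism of `V i` to an endomorphism of `V j` along `i = j`. -/
def castEnd {K : Type*} [Field K] {I : Type*} (V : I → Type*)
    [∀ i, AddCommGroup (V i)] [∀ i, Module K (V i)] {i j : I} (h : i = j)
    (f : Module.End K (V i)) : Module.End K (V j) := h ▸ f

/-!
Crawley-Boevey's trace argument. The images `U i = range (x i)` form a subrepresentation
on which every `J i` vanishes, so the moment map equation restricts to
`∑_{s(e)=i} B_e A_e − ∑_{t(e)=i} A_e B_e = λ · id` on `U`. Taking traces and summing over
the vertices, each edge contributes `tr (B_e A_e) − tr (A_e B_e) = 0`, hence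
`λ · ∑ᵢ dim Uᵢ = 0` in `K`. As `λ ≠ 0` and `∑ᵢ dim Uᵢ ≤ ∑ᵢ vᵢ` lies below the characteristic,
every `U i` is zero, i.e. `x = 0`.
-/

theorem Nat.eq_zero_of_cast_eq_zero_of_lt_ringChar {K : Type*} [Field K] {n N : ℕ}
    (hchar : ringChar K = 0 ∨ N < ringChar K) (hn : n ≤ N) (h : (n : K) = 0) : n = 0 := by
  have hdvd : ringChar K ∣ n := (ringChar.spec K n).1 h
  rcases hchar with hzero | hlt
  · rwa [hzero, zero_dvd_iff] at hdvd
  · by_contra hne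
    exact absurd (Nat.le_of_dvd (Nat.pos_of_ne_zero hne) hdvd) (by omega)

theorem trace_castEnd {K : Type*} [Field K] {I : Type*} {V : I → Type*}
    [∀ i, AddCommGroup (V i)] [∀ i, Module K (V i)] [∀ i, FiniteDimensional K (V i)]
    {i j : I} (h : i = j) (f : Module.End K (V i)) :
    LinearMap.trace K (V j) (castEnd V h f) = LinearMap.trace K (V i) f := by
  subst h
  rfl

section EdgeSum

variable {K : Type*} [Field K] {I : Type*} [DecidableEq I] {E : Type*} [Fintype E]

def edgeSum (V : I → Type*) [∀ i, AddCommGroup (V i)] [∀ i, Module K (V i)] (s : E → I)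
    (F : ∀ e, Module.End K (V (s e))) (i : I) : Module.End K (V i) :=
  ∑ e, if h : s e = i then castEnd V h (F e) else 0

variable {V : I → Type*} [∀ i, AddCommGroup (V i)] [∀ i, Module K (V i)]

theorem sum_trace_edgeSum [Fintype I] [∀ i, FiniteDimensional K (V i)] (s : E → I)
    (F : ∀ e, Module.End K (V (s e))) :
    ∑ i, LinearMap.trace K (V i) (edgeSum V s F i) = ∑ e, LinearMap.trace K (V (s e)) (F e) := by
  simp only [edgeSum, map_sum, apply_dite (LinearMap.trace K _), trace_castEnd, map_zero]
  rw [Finset.sum_comm]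
  simp

theorem comp_edgeSum {V' : I → Type*} [∀ i, AddCommGroup (V' i)] [∀ i, Module K (V' i)]
    (φ : ∀ i, V i →ₗ[K] V' i) (s : E → I) {F : ∀ e, Module.End K (V (s e))}
    {F' : ∀ e, Module.End K (V' (s e))} (hF : ∀ e, φ (s e) ∘ₗ F e = F' e ∘ₗ φ (s e)) (i : I) :
    φ i ∘ₗ edgeSum V s F i = edgeSum V' s F' i ∘ₗ φ i := by
  ext v
  simp only [edgeSum, LinearMap.comp_apply, LinearMap.sum_apply, map_sum]
  refine Finset.sum_congr rfl fun e _ => ?_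
  split_ifs with h
  · subst h
    exact LinearMap.congr_fun (hF e) v
  · simp

variable {s t : E → I}

/-- The moment map at vertex `i` without its framing term `I_i J_i`. -/
def quiverMoment (V : I → Type*) [∀ i, AddCommGroup (V i)] [∀ i, Module K (V i)]
    (f : ∀ e, V (s e) →ₗ[K] V (t e)) (g : ∀ e, V (t e) →ₗ[K] V (s e)) (i : I) :
    Module.End K (V i) :=
  edgeSum V s (fun e => g e ∘ₗ f e) i - edgeSum V t (fun e => f e ∘ₗ g e) i

theorem sum_trace_quiverMoment [Fintype I] [∀ i, FiniteDimensional K (V i)]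
    (f : ∀ e, V (s e) →ₗ[K] V (t e)) (g : ∀ e, V (t e) →ₗ[K] V (s e)) :
    ∑ i, LinearMap.trace K (V i) (quiverMoment V f g i) = 0 := by
  simp only [quiverMoment, map_sub, Finset.sum_sub_distrib, sum_trace_edgeSum]
  simp_rw [LinearMap.trace_comp_comm' (f _)]
  exact sub_self _

theorem comp_quiverMoment {V' : I → Type*} [∀ i, AddCommGroup (V' i)] [∀ i, Module K (V' i)]
    (φ : ∀ i, V i →ₗ[K] V' i) {f : ∀ e, V (s e) →ₗ[K] V (t e)} {g : ∀ e, V (t e) →ₗ[K] V (s e)}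
    {f' : ∀ e, V' (s e) →ₗ[K] V' (t e)} {g' : ∀ e, V' (t e) →ₗ[K] V' (s e)}
    (hf : ∀ e, φ (t e) ∘ₗ f e = f' e ∘ₗ φ (s e)) (hg : ∀ e, φ (s e) ∘ₗ g e = g' e ∘ₗ φ (t e))
    (i : I) : φ i ∘ₗ quiverMoment V f g i = quiverMoment V' f' g' i ∘ₗ φ i := by
  have hgf : ∀ e, φ (s e) ∘ₗ (g e ∘ₗ f e) = (g' e ∘ₗ f' e) ∘ₗ φ (s e) := fun e => by
    rw [← LinearMap.comp_assoc, hg, LinearMap.comp_assoc, hf, LinearMap.comp_assoc]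
  have hfg : ∀ e, φ (t e) ∘ₗ (f e ∘ₗ g e) = (f' e ∘ₗ g' e) ∘ₗ φ (t e) := fun e => by
    rw [← LinearMap.comp_assoc, hf, LinearMap.comp_assoc, hg, LinearMap.comp_assoc]
  rw [quiverMoment, quiverMoment, LinearMap.comp_sub, LinearMap.sub_comp,
    comp_edgeSum φ s hgf, comp_edgeSum φ t hfg]

theorem cast_sum_finrank_eq_zero_of_quiverMoment_eq_smul_id [Fintype I]
    [∀ i, FiniteDimensional K (V i)] {f : ∀ e, V (s e) →ₗ[K] V (t e)}
    {g : ∀ e, V (t e) →ₗ[K] V (s e)} {lam : K} (hlam : lam ≠ 0)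
    (h : ∀ i, quiverMoment V f g i = lam • LinearMap.id) :
    ((∑ i, finrank K (V i) : ℕ) : K) = 0 := by
  have htrace := sum_trace_quiverMoment f g
  simp only [h, map_smul, LinearMap.trace_id, smul_eq_mul, ← Finset.mul_sum] at htrace
  push_cast
  exact (mul_eq_zero.1 htrace).resolve_left hlam

end EdgeSum

theorem eq_bot_of_quiverMoment_apply_eq_smul {K : Type*} [Field K] {I : Type*} [Fintype I]
    [DecidableEq I] {E : Type*} [Fintype E] {s t : E → I} {V : I → Type*}
    [∀ i, AddCommGroup (V i)] [∀ i, Module K (V i)] [∀ i, FiniteDimensional K (V i)]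
    (hchar : ringChar K = 0 ∨ (∑ i, finrank K (V i)) < ringChar K) {lam : K} (hlam : lam ≠ 0)
    {A : ∀ e, V (s e) →ₗ[K] V (t e)} {B : ∀ e, V (t e) →ₗ[K] V (s e)}
    (U : ∀ i, Submodule K (V i)) (hA : ∀ e, ∀ u ∈ U (s e), A e u ∈ U (t e))
    (hB : ∀ e, ∀ u ∈ U (t e), B e u ∈ U (s e))
    (hU : ∀ i, ∀ u ∈ U i, quiverMoment V A B i u = lam • u) (i : I) : U i = ⊥ := by
  let f e : U (s e) →ₗ[K] U (t e) := (A e).restrict (hA e)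
  let g e : U (t e) →ₗ[K] U (s e) := (B e).restrict (hB e)
  have hres : ∀ i, quiverMoment (fun i => U i) f g i = lam • LinearMap.id := by
    intro i
    ext ⟨u, hu⟩
    have hcomm := LinearMap.congr_fun (comp_quiverMoment (fun i => (U i).subtype)
      (f := f) (g := g) (f' := A) (g' := B) (fun _ => rfl) (fun _ => rfl) i) ⟨u, hu⟩
    simpa [hU i u hu] using hcomm
  have hdim := cast_sum_finrank_eq_zero_of_quiverMoment_eq_smul_id hlam hres
  have hle : ∑ i, finrank K (U i) ≤ ∑ i, finrank K (V i) :=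
    Finset.sum_le_sum fun i _ => Submodule.finrank_le (U i)
  have hzero := Nat.eq_zero_of_cast_eq_zero_of_lt_ringChar hchar hle hdim
  exact Submodule.finrank_eq_zero.1 (Finset.sum_eq_zero_iff.1 hzero i (Finset.mem_univ i))

theorem quiver_infinitesimal_freeness_general
    (K : Type*) [Field K]
    (I : Type*) [Fintype I] [DecidableEq I]
    (E : Type*) [Fintype E] (s t : E → I)
    (V : I → Type*) [∀ i, AddCommGroup (V i)] [∀ i, Module K (V i)]
    [∀ i, FiniteDimensional K (V i)]
    (W : I → Type*) [∀ i, AddCommGroup (W i)] [∀ i, Module K (W i)]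
    (hchar : ringChar K = 0 ∨ (∑ i, Module.finrank K (V i)) < ringChar K)
    (lam : K) (hlam : lam ≠ 0)
    (A : ∀ e : E, V (s e) →ₗ[K] V (t e)) (B : ∀ e : E, V (t e) →ₗ[K] V (s e))
    (II : ∀ i : I, W i →ₗ[K] V i) (J : ∀ i : I, V i →ₗ[K] W i)
    (hmom : ∀ i : I,
      (II i ∘ₗ J i) + (∑ e : E, if h : s e = i then castEnd V h (B e ∘ₗ A e) else 0) -
          (∑ e : E, if h : t e = i then castEnd V h (A e ∘ₗ B e) else 0) =
        lam • (LinearMap.id : Module.End K (V i)))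
    (x : ∀ i : I, Module.End K (V i))
    (hA : ∀ e : E, x (t e) ∘ₗ A e = A e ∘ₗ x (s e))
    (hB : ∀ e : E, x (s e) ∘ₗ B e = B e ∘ₗ x (t e))
    (hJ : ∀ i : I, J i ∘ₗ x i = 0) :
    ∀ i : I, x i = 0 := by
  have hrange := eq_bot_of_quiverMoment_apply_eq_smul hchar hlam (fun i => LinearMap.range (x i))
    (by rintro e _ ⟨v, rfl⟩; exact ⟨A e v, LinearMap.congr_fun (hA e) v⟩)
    (by rintro e _ ⟨v, rfl⟩; exact ⟨B e v, LinearMap.congr_fun (hB e) v⟩)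
    (by
      rintro i _ ⟨v, rfl⟩
      have hJv : J i (x i v) = 0 := LinearMap.congr_fun (hJ i) v
      simpa [quiverMoment, edgeSum, add_sub_assoc, hJv] using LinearMap.congr_fun (hmom i) (x i v))
  exact fun i => LinearMap.range_eq_bot.1 (hrange i)

/-- Infinitesimal freeness at a solution of the deformed quiver moment map equation:
if `(A,I,B,J)` satisfies `I_i J_i + ∑_{s(e)=i} B_e A_e − ∑_{t(e)=i} A_e B_e = λ·Id` with
`λ ≠ 0` and `char K = 0` or `char K > ∑ᵢ vᵢ`, and `x = (xᵢ)` intertwines the data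
(`x_{t(e)} A_e = A_e x_{s(e)}`, `x_{s(e)} B_e = B_e x_{t(e)}`, `x_i I_i = 0`,
`J_i x_i = 0`), then `x = 0`. -/
theorem quiver_infinitesimal_freeness
    (K : Type*) [Field K]
    (I : Type*) [Fintype I] [DecidableEq I]
    (E : Type*) [Fintype E] (s t : E → I)
    (V : I → Type*) [∀ i, AddCommGroup (V i)] [∀ i, Module K (V i)]
    [∀ i, FiniteDimensional K (V i)]
    (W : I → Type*) [∀ i, AddCommGroup (W i)] [∀ i, Module K (W i)]
    [∀ i, FiniteDimensional K (W i)]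
    (hchar : ringChar K = 0 ∨ (∑ i, Module.finrank K (V i)) < ringChar K)
    (lam : K) (hlam : lam ≠ 0)
    (A : ∀ e : E, V (s e) →ₗ[K] V (t e)) (B : ∀ e : E, V (t e) →ₗ[K] V (s e))
    (II : ∀ i : I, W i →ₗ[K] V i) (J : ∀ i : I, V i →ₗ[K] W i)
    (hmom : ∀ i : I,
      (II i ∘ₗ J i) + (∑ e : E, if h : s e = i then castEnd V h (B e ∘ₗ A e) else 0) -
          (∑ e : E, if h : t e = i then castEnd V h (A e ∘ₗ B e) else 0) =
        lam • (LinearMap.id : Module.End K (V i)))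
    (x : ∀ i : I, Module.End K (V i))
    (hA : ∀ e : E, x (t e) ∘ₗ A e = A e ∘ₗ x (s e))
    (hB : ∀ e : E, x (s e) ∘ₗ B e = B e ∘ₗ x (t e))
    (hI : ∀ i : I, x i ∘ₗ II i = 0)
    (hJ : ∀ i : I, J i ∘ₗ x i = 0) :
    ∀ i : I, x i = 0 :=
  quiver_infinitesimal_freeness_general K I E s t V W hchar lam hlam A B II J hmom x hA hB hJ
end
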